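/- arXiv:1009.5979 — 6 statements merged into one kernel-verified Lean document; each statement's English description precedes it below -/
import Mathlib

section
/- Let R be an L×L Hermitian positive definite complex matrix, A an L×D complex matrix of rank D (D ≤ L), Φ a D×D Hermitian complex matrix, and suppose T is an invertible D×D matrix with TᴴΦT = Γ diagonal (with diagonal entries γ₁,…,γ_D) and Tᴴ(AᴴR⁻¹A)⁻¹T = I_D. Set A_ε := A·(T⁻¹)ᴴ and let a_{ε,i} denote the i-th column of A_ε. Then for each i, (A·Φ·Aᴴ)·(R⁻¹a_{ε,i}) = γ_i · R·(R⁻¹a_{ε,i}); that is, γ₁,…,γ_D are generalized eigenvalues of the matrix pair (AΦAᴴ, R) with generalized eigenvectors R⁻¹a_{ε,1},…,R⁻¹a_{ε,D}. -/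
/-!
Whitening by `T` turns the pair `(Φ, Aᴴ R⁻¹ A)` into `(Γ, I)`: the normalisation says
`Aᴴ R⁻¹ A = T Tᴴ`, so `Aᴴ R⁻¹ A_ε = T`, and then `A Φ Aᴴ R⁻¹ A_ε = A Φ T = A_ε Γ` because
`Φ T = (Tᴴ)⁻¹ Γ`. Reading this column by column gives the generalized eigen-equations.
-/

open Matrix
open scoped ComplexOrder

namespace Matrix

variable {n m K : Type*} [Fintype n] [DecidableEq n] [Fintype m]

section CommRing

variable [CommRing K]

theorem eq_mul_of_mul_inv_mul_eq_one {M X Y : Matrix n n K} (h : X * M⁻¹ * Y = 1) :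
    M = Y * X := by
  have hright : M⁻¹ * (Y * X) = 1 := by
    rw [← Matrix.mul_assoc]
    exact mul_eq_one_comm.mp (by rwa [← Matrix.mul_assoc])
  have hM : IsUnit M.det :=
    isUnit_nonsing_inv_det_iff.mp (isUnit_det_of_right_inverse hright)
  rw [← nonsing_inv_nonsing_inv M hM, inv_eq_right_inv hright]

theorem mulVec_col_of_mul_eq_mul_diagonal {P : Matrix m m K} {E : Matrix m n K} {γ : n → K}
    (h : P * E = E * diagonal γ) (i : n) : P *ᵥ E.col i = γ i • E.col i := by
  rw [← mulVec_single_one, mulVec_mulVec, h, ← mulVec_mulVec, diagonal_mulVec_single,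
    ← smul_eq_mul, Pi.single_smul, mulVec_smul, mulVec_single_one]

theorem mulVec_inv_mulVec_eq_smul_mulVec_inv_mulVec {M B : Matrix n n K} {c : K} {v : n → K}
    (hB : IsUnit B.det) (h : (M * B⁻¹) *ᵥ v = c • v) :
    M *ᵥ (B⁻¹ *ᵥ v) = c • (B *ᵥ (B⁻¹ *ᵥ v)) := by
  rw [mulVec_mulVec, mulVec_mulVec, mul_nonsing_inv B hB, one_mulVec, h]

end CommRing

theorem mul_mul_conjTranspose_inv_eq_conjTranspose_inv_mul_diagonal [CommRing K] [StarRing K]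
    {Φ T : Matrix n n K} {γ : n → K} (hT : IsUnit T.det) (hdiag : Tᴴ * Φ * T = diagonal γ) :
    Φ * (T * Tᴴ) * (T⁻¹)ᴴ = (T⁻¹)ᴴ * diagonal γ := by
  have hTTinv : Tᴴ * (T⁻¹)ᴴ = 1 := by
    rw [← conjTranspose_mul, nonsing_inv_mul T hT, conjTranspose_one]
  have hTinvT : (T⁻¹)ᴴ * Tᴴ = 1 := by
    rw [← conjTranspose_mul, mul_nonsing_inv T hT, conjTranspose_one]
  calc Φ * (T * Tᴴ) * (T⁻¹)ᴴ = (T⁻¹)ᴴ * Tᴴ * Φ * T * (Tᴴ * (T⁻¹)ᴴ) := by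
        simp only [hTinvT, hTTinv, Matrix.one_mul, Matrix.mul_one, Matrix.mul_assoc]
    _ = (T⁻¹)ᴴ * diagonal γ := by
        rw [hTTinv, Matrix.mul_one, Matrix.mul_assoc _ Tᴴ, Matrix.mul_assoc _ (Tᴴ * Φ), hdiag]

end Matrix

theorem stmt4_general (L D : ℕ)
    (R : Matrix (Fin L) (Fin L) ℂ) (hR : R.PosDef)
    (A : Matrix (Fin L) (Fin D) ℂ)
    (Φ : Matrix (Fin D) (Fin D) ℂ)
    (T : Matrix (Fin D) (Fin D) ℂ)
    (γ : Fin D → ℂ)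
    (hdiag : Tᴴ * Φ * T = Matrix.diagonal γ)
    (hnorm : Tᴴ * (Aᴴ * R⁻¹ * A)⁻¹ * T = 1) :
    ∀ i : Fin D,
      (A * Φ * Aᴴ) *ᵥ (R⁻¹ *ᵥ (fun j => (A * (T⁻¹)ᴴ) j i))
        = γ i • (R *ᵥ (R⁻¹ *ᵥ (fun j => (A * (T⁻¹)ᴴ) j i))) := by
  have hT : IsUnit T.det := isUnit_det_of_left_inverse hnorm
  have hGram : Aᴴ * R⁻¹ * A = T * Tᴴ := eq_mul_of_mul_inv_mul_eq_one hnorm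
  have hEigen : A * Φ * Aᴴ * R⁻¹ * (A * (T⁻¹)ᴴ) = A * (T⁻¹)ᴴ * diagonal γ := by
    calc A * Φ * Aᴴ * R⁻¹ * (A * (T⁻¹)ᴴ) = A * (Φ * (Aᴴ * R⁻¹ * A) * (T⁻¹)ᴴ) := by
          simp only [Matrix.mul_assoc]
      _ = A * (T⁻¹)ᴴ * diagonal γ := by
          rw [hGram, mul_mul_conjTranspose_inv_eq_conjTranspose_inv_mul_diagonal hT hdiag,
            Matrix.mul_assoc]
  intro i
  exact mulVec_inv_mulVec_eq_smul_mulVec_inv_mulVec hR.det_pos.ne'.isUnit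
    (mulVec_col_of_mul_eq_mul_diagonal hEigen i)

/-- Let `R` be an `L × L` Hermitian positive definite matrix, `A` an
`L × D` complex matrix of rank `D` (`D ≤ L`), `Φ` a `D × D` Hermitian matrix, and
`T` an invertible `D × D` matrix with `Tᴴ Φ T = Γ = diagonal γ` and
`Tᴴ (Aᴴ R⁻¹ A)⁻¹ T = I`.  Setting `A_ε := A (T⁻¹)ᴴ` with columns `a_{ε,i}`, for
each `i` one has `(A Φ Aᴴ)·(R⁻¹ a_{ε,i}) = γ_i · R·(R⁻¹ a_{ε,i})`, i.e. the
`γ_i` are generalized eigenvalues of the pair `(A Φ Aᴴ, R)` with generalized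
eigenvectors `R⁻¹ a_{ε,i}`. -/
theorem stmt4 (L D : ℕ) (hD : D ≤ L)
    (R : Matrix (Fin L) (Fin L) ℂ) (hR : R.PosDef)
    (A : Matrix (Fin L) (Fin D) ℂ) (hrank : A.rank = D)
    (Φ : Matrix (Fin D) (Fin D) ℂ) (hΦ : Φ.IsHermitian)
    (T : Matrix (Fin D) (Fin D) ℂ) (hT : IsUnit T.det)
    (γ : Fin D → ℂ)
    (hdiag : Tᴴ * Φ * T = Matrix.diagonal γ)
    (hnorm : Tᴴ * (Aᴴ * R⁻¹ * A)⁻¹ * T = 1) :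
    ∀ i : Fin D,
      (A * Φ * Aᴴ) *ᵥ (R⁻¹ *ᵥ (fun j => (A * (T⁻¹)ᴴ) j i))
        = γ i • (R *ᵥ (R⁻¹ *ᵥ (fun j => (A * (T⁻¹)ᴴ) j i))) :=
  stmt4_general L D R hR A Φ T γ hdiag hnorm
end

section
/- Let R be an L×L Hermitian positive definite complex matrix, a₀ ∈ ℂᴸ, A_ε an L×D complex matrix with A_εᴴR⁻¹A_ε = I_D, Γ = diag(γ₁,…,γ_D) with γ_i ∈ ℝ, and c ∈ ℂ. Let λ ∈ ℂ satisfy λ ≠ 1 and λ − 1 ≠ γ_i for every i, and suppose w ∈ ℂᴸ satisfies (c·a₀a₀ᴴ + A_ε Γ A_εᴴ)·w = (λ−1)·R·w. Then, with η₀ := c·(a₀ᴴw)/(λ−1) and ψ̃_i := a_{ε,i}ᴴ R⁻¹ a₀ (where a_{ε,i} is the i-th column of A_ε), the weight vector has the closed form w = η₀·[ R⁻¹a₀ + Σ_{i=1}^{D} (γ_i·ψ̃_i/(λ − 1 − γ_i))·R⁻¹a_{ε,i} ]. -/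
/-!
Multiplying the eigen-equation by `R⁻¹` expresses `(λ - 1) w` as `c (a₀ᴴ w) R⁻¹ a₀` plus
`R⁻¹ A_ε Γ u`, where `u := A_εᴴ w`. Applying `A_εᴴ` and using `A_εᴴ R⁻¹ A_ε = I` turns this into
the diagonal system `(λ - 1 - γ_i) u_i = c (a₀ᴴ w) ψ̃_i`, which is solved coordinatewise and
substituted back.
-/

open Matrix
open scoped ComplexOrder

namespace Matrix

variable {K n m : Type*} [Fintype n] [Fintype m]

theorem mul_mulVec_eq_sum [CommSemiring K] (M : Matrix n n K) (A : Matrix n m K) (v : m → K) :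
    (M * A) *ᵥ v = ∑ i, v i • (M *ᵥ Aᵀ i) := by
  simp only [← mulVec_mulVec, mulVec_eq_sum v A, op_smul_eq_smul, mulVec_sum, mulVec_smul]

variable [DecidableEq n] [DecidableEq m]

section CommRing

variable [CommRing K] {R : Matrix n n K} {A : Matrix n m K} {B : Matrix m n K}
  {a b w : n → K} {g : m → K} {c μ : K}

theorem smul_eq_of_mulVec_eq_smul_mulVec (hR : IsUnit R.det)
    (hw : (c • vecMulVec a b + A * diagonal g * B) *ᵥ w = μ • (R *ᵥ w)) :
    μ • w = (c * (b ⬝ᵥ w)) • (R⁻¹ *ᵥ a) + (R⁻¹ * A) *ᵥ (diagonal g *ᵥ (B *ᵥ w)) := by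
  have h := congrArg (R⁻¹ *ᵥ ·) hw
  simp only [add_mulVec, smul_mulVec, vecMulVec_mulVec, op_smul_eq_smul, mulVec_add,
    mulVec_smul, mulVec_mulVec, smul_smul, nonsing_inv_mul R hR, one_mulVec] at h
  rw [← h]
  simp only [mulVec_mulVec, Matrix.mul_assoc]

theorem sub_mul_mulVec_apply_eq (hR : IsUnit R.det) (hBA : B * R⁻¹ * A = 1)
    (hw : (c • vecMulVec a b + A * diagonal g * B) *ᵥ w = μ • (R *ᵥ w)) (i : m) :
    (μ - g i) * (B *ᵥ w) i = c * (b ⬝ᵥ w) * (B *ᵥ (R⁻¹ *ᵥ a)) i := by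
  have h := congrArg (B *ᵥ ·) (smul_eq_of_mulVec_eq_smul_mulVec hR hw)
  rw [mulVec_add, mulVec_smul, mulVec_smul, mulVec_mulVec (M := B) (N := R⁻¹ * A),
    ← Matrix.mul_assoc, hBA, one_mulVec] at h
  have hi := congrFun h i
  simp only [Pi.add_apply, Pi.smul_apply, smul_eq_mul, mulVec_diagonal] at hi
  linear_combination hi

end CommRing

theorem eq_smul_of_mulVec_eq_smul_mulVec [Field K] {R : Matrix n n K} (hR : IsUnit R.det)
    {A : Matrix n m K} {B : Matrix m n K} (hBA : B * R⁻¹ * A = 1)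
    {a b w : n → K} {g : m → K} {c μ : K} (hμ : μ ≠ 0) (hg : ∀ i, μ - g i ≠ 0)
    (hw : (c • vecMulVec a b + A * diagonal g * B) *ᵥ w = μ • (R *ᵥ w)) :
    w = (c * (b ⬝ᵥ w) / μ) •
      (R⁻¹ *ᵥ a + ∑ i, (g i * (B i ⬝ᵥ (R⁻¹ *ᵥ a)) / (μ - g i)) • (R⁻¹ *ᵥ Aᵀ i)) := by
  have hcoord i : (B *ᵥ w) i = c * (b ⬝ᵥ w) * (B i ⬝ᵥ (R⁻¹ *ᵥ a)) / (μ - g i) := by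
    rw [eq_div_iff (hg i), mul_comm]
    exact sub_mul_mulVec_apply_eq hR hBA hw i
  apply smul_right_injective (n → K) hμ
  simp only [smul_eq_of_mulVec_eq_smul_mulVec hR hw, mul_mulVec_eq_sum, mulVec_diagonal, hcoord,
    smul_smul, smul_add, Finset.smul_sum]
  congr 1
  · field_simp
  · refine Finset.sum_congr rfl fun i _ => ?_
    congr 1
    field_simp [hg i]

end Matrix

/-- Let `R` be an `L × L` Hermitian positive definite matrix,
`a₀ ∈ ℂᴸ`, `A_ε` an `L × D` matrix with `A_εᴴ R⁻¹ A_ε = I`,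
`Γ = diag(γ₁,…,γ_D)` with real `γ_i`, and `c ∈ ℂ`.  If `λ ≠ 1`,
`λ − 1 ≠ γ_i` for every `i`, and `w` satisfies
`(c·a₀a₀ᴴ + A_ε Γ A_εᴴ)·w = (λ−1)·R·w`, then with
`η₀ := c·(a₀ᴴw)/(λ−1)` and `ψ̃_i := a_{ε,i}ᴴ R⁻¹ a₀`,
`w = η₀·[R⁻¹a₀ + Σᵢ (γ_i ψ̃_i/(λ−1−γ_i))·R⁻¹a_{ε,i}]`. -/
theorem stmt5 (L D : ℕ)
    (R : Matrix (Fin L) (Fin L) ℂ) (hR : R.PosDef)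
    (a₀ : Fin L → ℂ)
    (Aε : Matrix (Fin L) (Fin D) ℂ) (hAε : Aεᴴ * R⁻¹ * Aε = 1)
    (γ : Fin D → ℝ) (c lam : ℂ)
    (hlam1 : lam ≠ 1) (hlamγ : ∀ i, lam - 1 ≠ (γ i : ℂ))
    (w : Fin L → ℂ)
    (hw : (c • vecMulVec a₀ (star a₀)
            + Aε * Matrix.diagonal (fun i => (γ i : ℂ)) * Aεᴴ) *ᵥ w
          = (lam - 1) • (R *ᵥ w)) :
    w = (c * (star a₀ ⬝ᵥ w) / (lam - 1)) •
        (R⁻¹ *ᵥ a₀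
          + ∑ i : Fin D,
              ((γ i : ℂ) * (star (fun j => Aε j i) ⬝ᵥ (R⁻¹ *ᵥ a₀))
                  / (lam - 1 - (γ i : ℂ))) • (R⁻¹ *ᵥ (fun j => Aε j i))) :=
  eq_smul_of_mulVec_eq_smul_mulVec ((isUnit_iff_isUnit_det R).mp hR.isUnit) hAε
    (sub_ne_zero.mpr hlam1) (fun i => sub_ne_zero.mpr (hlamγ i)) hw
end

section
/- Let δ be a real number with 0 < δ < 1. Define γ₋ := √(δ² + δ) − δ and, for x ∈ ℝ, f(x) := (1/2)·[1 − x − √((1−x)² − 4δ|x|)]. Then: (i) 0 ≤ γ₋ ≤ 1/2, so 1 − 2γ₋ ≥ 0; (ii) for every x ≤ 1 − 2γ₋ one has (1−x)² − 4δ|x| ≥ 0, so f(x) is well-defined as a real number; and (iii) for every x ≤ 1 − 2γ₋, 0 ≤ f(x) ≤ max{δ, γ₋}. -/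
/-!
`γ₋ = √(δ² + δ) − δ` is the nonnegative root of `γ² + 2δγ = δ`. Writing `D(x) = (1 − x)² − 4δ|x|`,
one has `D(x) − (1 − x − 2γ₋)² = 4(γ₋ + δ)(1 − 2γ₋ − x)` for `x ≥ 0` and
`D(x) − (1 − x − 2δ)² = 4δ(1 − δ)` for `x ≤ 0`, so on `x ≤ 1 − 2γ₋` the discriminant dominates a
square `(1 − x − 2c)²` with `c ≤ max δ γ₋`. This gives `D(x) ≥ 0` and `f(x) ≤ c`, while
`f(x) ≥ 0` only needs `D(x) ≤ (1 − x)²`.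
-/

open Real

namespace Real

lemma half_mul_sub_sqrt_nonneg {a D : ℝ} (ha : 0 ≤ a) (hD : D ≤ a ^ 2) :
    0 ≤ 1 / 2 * (a - √D) := by
  have : √D ≤ a := (sqrt_le_iff).2 ⟨ha, hD⟩
  linarith

lemma half_mul_sub_sqrt_le {a c D : ℝ} (h : (a - 2 * c) ^ 2 ≤ D) :
    1 / 2 * (a - √D) ≤ c := by
  have : a - 2 * c ≤ √D := (le_abs_self _).trans (abs_le_sqrt h)
  linarith

end Real

noncomputable def gammaMinus (δ : ℝ) : ℝ := √(δ ^ 2 + δ) - δ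

section gammaMinus

variable {δ : ℝ}

lemma gammaMinus_nonneg (hδ : 0 ≤ δ) : 0 ≤ gammaMinus δ := by
  have : δ ≤ √(δ ^ 2 + δ) := (le_sqrt hδ (by positivity)).2 (by linarith)
  unfold gammaMinus
  linarith

lemma gammaMinus_le_half (hδ : 0 ≤ δ) : gammaMinus δ ≤ 1 / 2 := by
  have : √(δ ^ 2 + δ) ≤ δ + 1 / 2 := (sqrt_le_iff).2 ⟨by linarith, by nlinarith⟩
  unfold gammaMinus
  linarith

lemma gammaMinus_sq_add_two_mul (hδ : 0 ≤ δ) :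
    gammaMinus δ ^ 2 + 2 * δ * gammaMinus δ = δ := by
  have := sq_sqrt (show 0 ≤ δ ^ 2 + δ by positivity)
  unfold gammaMinus
  linear_combination this

lemma sq_sub_two_gammaMinus_le {x : ℝ} (hδ : 0 ≤ δ) (hx : x ≤ 1 - 2 * gammaMinus δ) :
    (1 - x - 2 * gammaMinus δ) ^ 2 ≤ (1 - x) ^ 2 - 4 * δ * x := by
  have hγ := gammaMinus_sq_add_two_mul hδ
  have hprod : 0 ≤ (gammaMinus δ + δ) * (1 - 2 * gammaMinus δ - x) :=
    mul_nonneg (by linarith [gammaMinus_nonneg hδ]) (by linarith)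
  nlinarith

lemma exists_le_max_sq_le_discr {x : ℝ} (hδ0 : 0 ≤ δ) (hδ1 : δ ≤ 1)
    (hx : x ≤ 1 - 2 * gammaMinus δ) :
    ∃ c ≤ max δ (gammaMinus δ), (1 - x - 2 * c) ^ 2 ≤ (1 - x) ^ 2 - 4 * δ * |x| := by
  rcases le_total 0 x with hx0 | hx0
  · refine ⟨gammaMinus δ, le_max_right _ _, ?_⟩
    rw [abs_of_nonneg hx0]
    exact sq_sub_two_gammaMinus_le hδ0 hx
  · refine ⟨δ, le_max_left _ _, ?_⟩
    rw [abs_of_nonpos hx0]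
    nlinarith

end gammaMinus

/-- For real `δ` with `0 < δ < 1`, define
`γ₋ := √(δ² + δ) − δ` and `f(x) := (1/2)·[1 − x − √((1−x)² − 4δ|x|)]`.  Then:
(i) `0 ≤ γ₋ ≤ 1/2`, so `1 − 2γ₋ ≥ 0`;
(ii) for every `x ≤ 1 − 2γ₋`, `(1−x)² − 4δ|x| ≥ 0` (so `f(x)` is a
well-defined real number); and
(iii) for every `x ≤ 1 − 2γ₋`, `0 ≤ f(x) ≤ max{δ, γ₋}`. -/
theorem stmt7 (δ : ℝ) (hδ0 : 0 < δ) (hδ1 : δ < 1) :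
    let γm : ℝ := Real.sqrt (δ ^ 2 + δ) - δ
    let f : ℝ → ℝ := fun x =>
      (1 / 2) * (1 - x - Real.sqrt ((1 - x) ^ 2 - 4 * δ * |x|))
    ((0 ≤ γm ∧ γm ≤ 1 / 2) ∧ 0 ≤ 1 - 2 * γm) ∧
    (∀ x : ℝ, x ≤ 1 - 2 * γm → 0 ≤ (1 - x) ^ 2 - 4 * δ * |x|) ∧
    (∀ x : ℝ, x ≤ 1 - 2 * γm → 0 ≤ f x ∧ f x ≤ max δ γm) := by
  intro γm f
  have hγ0 : 0 ≤ γm := gammaMinus_nonneg hδ0.le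
  have hγ1 : γm ≤ 1 / 2 := gammaMinus_le_half hδ0.le
  refine ⟨⟨⟨hγ0, hγ1⟩, by linarith⟩, fun x hx => ?_, fun x hx => ⟨?_, ?_⟩⟩
  · obtain ⟨c, -, hsq⟩ := exists_le_max_sq_le_discr hδ0.le hδ1.le hx
    exact (sq_nonneg _).trans hsq
  · exact half_mul_sub_sqrt_nonneg (by linarith) (sub_le_self _ (by positivity))
  · obtain ⟨c, hc, hsq⟩ := exists_le_max_sq_le_discr hδ0.le hδ1.le hx
    exact (half_mul_sub_sqrt_le hsq).trans hc
end

section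
/- Let γ₀ > γ₁ > 0, s > 0 and κ > 0 be real numbers, set δ := κ²/s and x := γ₁/γ₀, and assume (1−x)² ≥ 4δx. Then the feasible set F := { f ∈ ℝ : f > 0 and (γ₁κ/s)·f² − (γ₀−γ₁)·f + γ₀κ ≤ 0 } is a nonempty closed interval [f₋, f₊] with 0 < f₋ ≤ f₊, and the minimum of γ₀κ/f over f ∈ F equals γ₀·(1/2)·[(1−x) − √((1−x)² − 4δx)], attained at f = f₊. -/
/-!
The constraint is a quadratic `a f² - b f + c ≤ 0` with `a, b, c > 0`, so for a nonnegative
discriminant `D = b² - 4ac` its solutions form the interval between the roots `(b ∓ √D) / (2a)`,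
both positive since `√D < b`. The objective `c / f` decreases in `f`, so it is minimal at the
larger root, where Vieta gives `c / f₊ = a f₋ = (b - √D) / 2`. In the beamformer variables
`D = γ₀² ((1 - x)² - 4δx)`.
-/

open Set

theorem sub_mul_sub_nonpos_iff_mem_Icc {R : Type*} [Ring R] [LinearOrder R]
    [IsStrictOrderedRing R] {m p f : R} (hmp : m ≤ p) : (f - m) * (f - p) ≤ 0 ↔ f ∈ Icc m p := by
  rw [mul_nonpos_iff, mem_Icc, sub_nonneg, sub_nonpos, sub_nonpos, sub_nonneg]
  constructor
  · rintro (h | ⟨hfm, hpf⟩)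
    · exact h
    · exact ⟨(hmp.trans hpf), hfm.trans hmp⟩
  · exact Or.inl

section Quadratic

variable {a b c s : ℝ}

theorem quadratic_eq_mul_sub_roots (ha : a ≠ 0) (hs : s ^ 2 = b ^ 2 - 4 * a * c) (f : ℝ) :
    a * f ^ 2 - b * f + c = a * ((f - (b - s) / (2 * a)) * (f - (b + s) / (2 * a))) := by
  field_simp
  linear_combination hs

theorem quadratic_nonpos_iff_mem_Icc (ha : 0 < a) (hs₀ : 0 ≤ s) (hs : s ^ 2 = b ^ 2 - 4 * a * c)
    (f : ℝ) : a * f ^ 2 - b * f + c ≤ 0 ↔ f ∈ Icc ((b - s) / (2 * a)) ((b + s) / (2 * a)) := by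
  have hroots : (b - s) / (2 * a) ≤ (b + s) / (2 * a) := by gcongr; linarith
  rw [quadratic_eq_mul_sub_roots ha.ne' hs, ← sub_mul_sub_nonpos_iff_mem_Icc hroots]
  simpa using mul_le_mul_iff_of_pos_left (c := 0) ha

theorem lt_of_sq_eq_discrim (ha : 0 < a) (hb : 0 < b) (hc : 0 < c) (hs₀ : 0 ≤ s)
    (hs : s ^ 2 = b ^ 2 - 4 * a * c) : s < b :=
  pow_lt_pow_iff_left₀ hs₀ hb.le two_ne_zero |>.1 (by nlinarith [mul_pos ha hc])

theorem div_larger_root (hpos : 0 < b + s) (hs : s ^ 2 = b ^ 2 - 4 * a * c) :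
    c / ((b + s) / (2 * a)) = (b - s) / 2 := by
  field_simp
  linear_combination hs

end Quadratic

theorem isLeast_image_div_Icc {c m p : ℝ} (hc : 0 ≤ c) (hm : 0 < m) (hmp : m ≤ p) :
    IsLeast ((fun f => c / f) '' Icc m p) (c / p) := by
  refine ⟨⟨p, right_mem_Icc.2 hmp, rfl⟩, ?_⟩
  rintro _ ⟨f, ⟨hmf, hfp⟩, rfl⟩
  exact div_le_div_of_nonneg_left hc (hm.trans_le hmf) hfp

/-- Let `γ₀ > γ₁ > 0`, `s > 0`, `κ > 0`, `δ := κ²/s`,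
`x := γ₁/γ₀`, and assume `(1−x)² ≥ 4δx`.  Then the feasible set
`F := {f : f > 0 ∧ (γ₁κ/s)·f² − (γ₀−γ₁)·f + γ₀κ ≤ 0}` is a nonempty closed
interval `[f₋, f₊]` with `0 < f₋ ≤ f₊`, and the minimum of `γ₀κ/f` over
`f ∈ F` equals `γ₀·(1/2)·[(1−x) − √((1−x)² − 4δx)]`, attained at `f = f₊`. -/
theorem stmt8 (γ₀ γ₁ s κ : ℝ) (h01 : γ₁ < γ₀) (h1 : 0 < γ₁) (hs : 0 < s)
    (hκ : 0 < κ)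
    (hfeas : (1 - γ₁ / γ₀) ^ 2 ≥ 4 * (κ ^ 2 / s) * (γ₁ / γ₀)) :
    let δ : ℝ := κ ^ 2 / s
    let x : ℝ := γ₁ / γ₀
    let F : Set ℝ :=
      {f | 0 < f ∧ (γ₁ * κ / s) * f ^ 2 - (γ₀ - γ₁) * f + γ₀ * κ ≤ 0}
    ∃ fm fp : ℝ, 0 < fm ∧ fm ≤ fp ∧ F = Set.Icc fm fp ∧
      IsLeast ((fun f => γ₀ * κ / f) '' F)
        (γ₀ * ((1 / 2) * ((1 - x) - Real.sqrt ((1 - x) ^ 2 - 4 * δ * x)))) ∧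
      γ₀ * κ / fp
        = γ₀ * ((1 / 2) * ((1 - x) - Real.sqrt ((1 - x) ^ 2 - 4 * δ * x))) := by
  intro δ x F
  have hγ₀ : 0 < γ₀ := h1.trans h01
  set a := γ₁ * κ / s
  set b := γ₀ - γ₁
  set c := γ₀ * κ
  have ha : 0 < a := by positivity
  have hb : 0 < b := sub_pos.2 h01
  have hc : 0 < c := by positivity
  set r := γ₀ * √((1 - x) ^ 2 - 4 * δ * x)
  have hdiscrim : r ^ 2 = b ^ 2 - 4 * a * c := by
    rw [mul_pow, Real.sq_sqrt (sub_nonneg.2 hfeas)]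
    simp only [a, b, c]
    field_simp
  have hr₀ : 0 ≤ r := by positivity
  have hrb : r < b := lt_of_sq_eq_discrim ha hb hc hr₀ hdiscrim
  have hfm : 0 < (b - r) / (2 * a) := by have := sub_pos.2 hrb; positivity
  have hmp : (b - r) / (2 * a) ≤ (b + r) / (2 * a) := by gcongr; linarith
  have hF : F = Icc ((b - r) / (2 * a)) ((b + r) / (2 * a)) := by
    ext f
    change 0 < f ∧ a * f ^ 2 - b * f + c ≤ 0 ↔ _
    rw [quadratic_nonpos_iff_mem_Icc ha hr₀ hdiscrim]
    exact and_iff_right_of_imp fun hf => hfm.trans_le hf.1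
  have hmin :
      c / ((b + r) / (2 * a)) = γ₀ * ((1 / 2) * ((1 - x) - √((1 - x) ^ 2 - 4 * δ * x))) := by
    rw [div_larger_root (by linarith) hdiscrim]
    simp only [r, b, x]
    field_simp
  refine ⟨_, _, hfm, hmp, hF, ?_, hmin⟩
  rw [hF, ← hmin]
  exact isLeast_image_div_Icc hc.le hfm hmp
end

section
/- Let A and B be n×n Hermitian positive semidefinite complex matrices, let N₀ := ker(A) ∩ ker(B) have dimension k, and let E₀ be an n×(n−k) complex matrix whose columns form an orthonormal basis of N₀^⊥. Then for every λ ∈ ℂ: det( (A + I_n) − λ·(B + I_n) ) = (1−λ)^k · det( (E₀ᴴAE₀ + I_{n−k}) − λ·(E₀ᴴBE₀ + I_{n−k}) ). In particular, the generalized eigenvalues of the pair (A + I, B + I) are exactly those of (E₀ᴴAE₀ + I, E₀ᴴBE₀ + I) together with the eigenvalue 1 with multiplicity k. -/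
open Matrix
open scoped ComplexOrder

/-!
Complete the orthonormal columns of `E₀` by an orthonormal basis `F` of `ker A ∩ ker B` to a
unitary `W = [E₀ F]`. Since `(A + I - λ(B + I)) F = (1 - λ) F` and `Fᴴ E₀ = 0`, the conjugate
`Wᴴ (A + I - λ(B + I)) W` is block triangular with diagonal blocks
`E₀ᴴ (A + I - λ(B + I)) E₀` and `(1 - λ) I_k`.
-/

namespace Matrix

variable {R : Type*} [CommRing R] {m n ι : Type*} [Fintype m] [DecidableEq m]
  [Fintype n] [DecidableEq n] [Fintype ι] [DecidableEq ι]

theorem det_mul_mul_of_mul_eq_one {X : Matrix ι n R} {Y : Matrix n ι R} (hXY : X * Y = 1)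
    (hcard : Fintype.card ι = Fintype.card n) (M : Matrix n n R) :
    (X * M * Y).det = M.det := by
  let e : ι ≃ n := Fintype.equivOfCardEq hcard
  have hsub : ∀ {p : Type _} [Fintype p] (P : Matrix ι p R) (Q : Matrix p ι R),
      (P * Q).submatrix e.symm e.symm = P.submatrix e.symm id * Q.submatrix id e.symm :=
    fun P Q => (submatrix_mul_equiv P Q _ (Equiv.refl _) _).symm
  have hunit : (X.submatrix e.symm id).det * (Y.submatrix id e.symm).det = 1 := by
    rw [← det_mul, ← hsub, hXY, submatrix_one_equiv, det_one]
  calc (X * M * Y).det = ((X * M * Y).submatrix e.symm e.symm).det :=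
        (det_submatrix_equiv_self e.symm _).symm
    _ = (X.submatrix e.symm id).det * M.det * (Y.submatrix id e.symm).det := by
        rw [hsub, ← submatrix_id_id M, ← submatrix_mul_equiv _ _ _ (Equiv.refl n), det_mul,
          det_mul]
        rfl
    _ = M.det := by linear_combination M.det * hunit

theorem det_eq_pow_mul_det_of_mul_eq_smul [StarRing R] {E : Matrix n m R} {F : Matrix n ι R}
    (hE : Eᴴ * E = 1) (hF : Fᴴ * F = 1) (hFE : Fᴴ * E = 0)
    (hcard : Fintype.card m + Fintype.card ι = Fintype.card n)
    {M : Matrix n n R} {c : R} (hMF : M * F = c • F) :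
    M.det = c ^ Fintype.card ι * (Eᴴ * M * E).det := by
  have hEF : Eᴴ * F = 0 := by rw [← conjTranspose_conjTranspose (Eᴴ * F), conjTranspose_mul,
    conjTranspose_conjTranspose, hFE, conjTranspose_zero]
  have hW : (fromCols E F)ᴴ * fromCols E F = 1 := by
    rw [conjTranspose_fromCols_eq_fromRows_conjTranspose, fromRows_mul_fromCols, hE, hEF, hFE, hF,
      fromBlocks_one]
  have hblocks : (fromCols E F)ᴴ * M * fromCols E F
      = fromBlocks (Eᴴ * M * E) 0 (Fᴴ * M * E) (c • 1) := by
    rw [conjTranspose_fromCols_eq_fromRows_conjTranspose, fromRows_mul, fromRows_mul_fromCols,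
      Matrix.mul_assoc Eᴴ M F, Matrix.mul_assoc Fᴴ M F, hMF, Matrix.mul_smul, Matrix.mul_smul, hEF,
      hF, smul_zero]
  rw [← det_mul_mul_of_mul_eq_one hW (by simpa using hcard) M, hblocks, det_fromBlocks_zero₁₂,
    det_smul, det_one, mul_one, mul_comm]

end Matrix

theorem Submodule.exists_orthonormal_cols_mem {𝕜 ι : Type*} [RCLike 𝕜] [Fintype ι]
    (N : Submodule 𝕜 (ι → 𝕜)) {k : ℕ} (hN : Module.finrank 𝕜 N = k) :
    ∃ F : Matrix ι (Fin k) 𝕜, Fᴴ * F = 1 ∧ ∀ j, F.col j ∈ N := by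
  let N₂ : Submodule 𝕜 (EuclideanSpace 𝕜 ι) :=
    N.map (WithLp.linearEquiv 2 𝕜 (ι → 𝕜)).symm.toLinearMap
  have hN₂ : Module.finrank 𝕜 N₂ = k := (LinearEquiv.finrank_map_eq _ _).trans hN
  let b : OrthonormalBasis (Fin k) 𝕜 N₂ := (stdOrthonormalBasis 𝕜 N₂).reindex (finCongr hN₂)
  refine ⟨Matrix.of fun i j => (b j : EuclideanSpace 𝕜 ι) i, ?_, fun j => ?_⟩
  · ext i j
    simpa [mul_apply, Matrix.one_apply, EuclideanSpace.inner_eq_star_dotProduct, dotProduct,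
      mul_comm] using (orthonormal_iff_ite.mp b.orthonormal) i j
  · obtain ⟨x, hx, hxb⟩ := Submodule.mem_map.mp (b j).2
    convert hx
    ext i
    simp [← hxb]

theorem stmt10_general (n k : ℕ)
    (A B : Matrix (Fin n) (Fin n) ℂ)
    (hdim : Module.finrank ℂ
        ↥(LinearMap.ker A.mulVecLin ⊓ LinearMap.ker B.mulVecLin) = k)
    (E₀ : Matrix (Fin n) (Fin (n - k)) ℂ)
    (hE1 : E₀ᴴ * E₀ = 1)
    (hE2 : ∀ w : Fin n → ℂ,
      (∃ v : Fin (n - k) → ℂ, E₀ *ᵥ v = w) ↔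
      (∀ u : Fin n → ℂ, A *ᵥ u = 0 → B *ᵥ u = 0 → star u ⬝ᵥ w = 0)) :
    (∀ lam : ℂ,
      ((A + 1) - lam • (B + 1)).det
        = (1 - lam) ^ k *
          ((E₀ᴴ * A * E₀ + 1) - lam • (E₀ᴴ * B * E₀ + 1)).det) ∧
    (∀ lam : ℂ,
      ((A + 1) - lam • (B + 1)).det = 0 ↔
        ((lam = 1 ∧ 1 ≤ k) ∨
          ((E₀ᴴ * A * E₀ + 1) - lam • (E₀ᴴ * B * E₀ + 1)).det = 0)) := by
  obtain ⟨F, hF, hFker⟩ := Submodule.exists_orthonormal_cols_mem _ hdim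
  have hAF : A * F = 0 := ext_col fun j => (hFker j).1
  have hBF : B * F = 0 := ext_col fun j => (hFker j).2
  have hFE : Fᴴ * E₀ = 0 := by
    ext j i
    exact (hE2 (E₀.col i)).1 ⟨_, mulVec_single_one E₀ i⟩ _ (hFker j).1 (hFker j).2
  have hk : k ≤ n := by
    simpa [← hdim] using
      Submodule.finrank_le (LinearMap.ker A.mulVecLin ⊓ LinearMap.ker B.mulVecLin)
  have hdet : ∀ lam : ℂ, ((A + 1) - lam • (B + 1)).det
      = (1 - lam) ^ k * ((E₀ᴴ * A * E₀ + 1) - lam • (E₀ᴴ * B * E₀ + 1)).det := by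
    intro lam
    have hMF : ((A + 1) - lam • (B + 1)) * F = (1 - lam) • F := by
      simp [Matrix.sub_mul, Matrix.add_mul, hAF, hBF, sub_smul]
    have hcard : Fintype.card (Fin (n - k)) + Fintype.card (Fin k) = Fintype.card (Fin n) := by
      simp only [Fintype.card_fin]; omega
    rw [det_eq_pow_mul_det_of_mul_eq_smul hE1 hF hFE hcard hMF, Fintype.card_fin]
    simp [Matrix.mul_sub, Matrix.sub_mul, Matrix.mul_add, Matrix.add_mul, hE1]
  refine ⟨hdet, fun lam => ?_⟩
  rw [hdet, mul_eq_zero, pow_eq_zero_iff', sub_eq_zero, eq_comm (a := (1 : ℂ)),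
    Nat.one_le_iff_ne_zero]

/-- Let `A, B` be `n × n` Hermitian positive semidefinite complex
matrices, `N₀ := ker A ∩ ker B` of dimension `k`, and let `E₀` be an
`n × (n−k)` matrix whose columns form an orthonormal basis of `N₀ᗮ` (encoded by
`E₀ᴴ E₀ = 1` together with: the column span of `E₀` is exactly the orthogonal
complement of `N₀` for the standard inner product on `ℂⁿ`).  Then for every
`λ ∈ ℂ`:
`det((A + I) − λ(B + I)) = (1−λ)^k · det((E₀ᴴAE₀ + I) − λ(E₀ᴴBE₀ + I))`;
in particular the generalized eigenvalues of `(A + I, B + I)` are those of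
`(E₀ᴴAE₀ + I, E₀ᴴBE₀ + I)` together with `1` (with multiplicity `k`). -/
theorem stmt10 (n k : ℕ) (hk : k ≤ n)
    (A B : Matrix (Fin n) (Fin n) ℂ) (hA : A.PosSemidef) (hB : B.PosSemidef)
    (hdim : Module.finrank ℂ
        ↥(LinearMap.ker A.mulVecLin ⊓ LinearMap.ker B.mulVecLin) = k)
    (E₀ : Matrix (Fin n) (Fin (n - k)) ℂ)
    (hE1 : E₀ᴴ * E₀ = 1)
    (hE2 : ∀ w : Fin n → ℂ,
      (∃ v : Fin (n - k) → ℂ, E₀ *ᵥ v = w) ↔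
      (∀ u : Fin n → ℂ, A *ᵥ u = 0 → B *ᵥ u = 0 → star u ⬝ᵥ w = 0)) :
    (∀ lam : ℂ,
      ((A + 1) - lam • (B + 1)).det
        = (1 - lam) ^ k *
          ((E₀ᴴ * A * E₀ + 1) - lam • (E₀ᴴ * B * E₀ + 1)).det) ∧
    (∀ lam : ℂ,
      ((A + 1) - lam • (B + 1)).det = 0 ↔
        ((lam = 1 ∧ 1 ≤ k) ∨
          ((E₀ᴴ * A * E₀ + 1) - lam • (E₀ᴴ * B * E₀ + 1)).det = 0)) :=
  stmt10_general n k A B hdim E₀ hE1 hE2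
end

section
/- Let Q be an L×L Hermitian positive definite complex matrix, A an L×D complex matrix of rank D (so AᴴQ⁻¹A is invertible), and Φ a D×D Hermitian complex matrix. Then for every λ ∈ ℂ with λ ≠ 0: det( λ·(AᴴQ⁻¹A)⁻¹ − Φ ) = 0 if and only if det( λ·Q − A·Φ·Aᴴ ) = 0. That is, the pairs (Φ, (AᴴQ⁻¹A)⁻¹) and (AΦAᴴ, Q) have the same nonzero generalized eigenvalues. -/
open Matrix
open scoped ComplexOrder

/-!
Put `B = Aᴴ Q⁻¹ A`. It is positive definite because `A` has full column rank. Multiplying on the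
right by `B` turns `λ B⁻¹ - Φ` into `λ - Φ B`, and multiplying on the left by `Q⁻¹` turns
`λ Q - A Φ Aᴴ` into `λ - (Q⁻¹ A)(Φ Aᴴ)`. Since `Φ B = (Φ Aᴴ)(Q⁻¹ A)`, Sylvester's identity
`det (1 - X Y) = det (1 - Y X)` shows that the two have the same nonzero eigenvalues.
-/

namespace Matrix

theorem mulVec_injective_of_rank_eq_card {K l n : Type*} [Field K] [Fintype n]
    {A : Matrix l n K} (hA : A.rank = Fintype.card n) :
    Function.Injective A.mulVec := by
  rw [mulVec_injective_iff, linearIndependent_iff_card_eq_finrank_span, ← hA,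
    rank_eq_finrank_span_cols]
  rfl

variable {K : Type*} [Field K] {l n : Type*} [Fintype l] [Fintype n] [DecidableEq l] [DecidableEq n]

theorem det_smul_one_sub_mul_comm_eq_zero_iff (M : Matrix l n K) (N : Matrix n l K) {c : K}
    (hc : c ≠ 0) :
    (c • (1 : Matrix l l K) - M * N).det = 0 ↔ (c • (1 : Matrix n n K) - N * M).det = 0 := by
  have hMN : c • (1 : Matrix l l K) - M * N = c • (1 - (c⁻¹ • M) * N) := by
    rw [smul_sub, smul_mul, smul_smul, mul_inv_cancel₀ hc, one_smul]
  have hNM : c • (1 : Matrix n n K) - N * M = c • (1 - N * (c⁻¹ • M)) := by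
    rw [smul_sub, Matrix.mul_smul, smul_smul, mul_inv_cancel₀ hc, one_smul]
  rw [hMN, hNM, det_smul, det_smul, det_one_sub_mul_comm, mul_eq_zero, mul_eq_zero,
    or_iff_right (pow_ne_zero _ hc), or_iff_right (pow_ne_zero _ hc)]

theorem det_smul_inv_sub_eq_zero_iff_det_smul_sub_mul_mul_eq_zero {P : Matrix l l K}
    (hP : IsUnit P) (A : Matrix l n K) (C : Matrix n l K) (Φ : Matrix n n K)
    (hB : IsUnit (C * P⁻¹ * A)) {c : K} (hc : c ≠ 0) :
    (c • (C * P⁻¹ * A)⁻¹ - Φ).det = 0 ↔ (c • P - A * Φ * C).det = 0 := by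
  have hPdet := (isUnit_iff_isUnit_det P).mp hP
  have hBdet := (isUnit_iff_isUnit_det _).mp hB
  calc (c • (C * P⁻¹ * A)⁻¹ - Φ).det = 0
      ↔ ((c • (C * P⁻¹ * A)⁻¹ - Φ) * (C * P⁻¹ * A)).det = 0 := by
        rw [det_mul, hBdet.mul_left_eq_zero]
    _ ↔ (c • (1 : Matrix n n K) - (Φ * C) * (P⁻¹ * A)).det = 0 := by
        rw [sub_mul, smul_mul, nonsing_inv_mul _ hBdet]
        simp only [Matrix.mul_assoc]
    _ ↔ (c • (1 : Matrix l l K) - (P⁻¹ * A) * (Φ * C)).det = 0 :=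
        (det_smul_one_sub_mul_comm_eq_zero_iff _ _ hc).symm
    _ ↔ (P * (c • (1 : Matrix l l K) - (P⁻¹ * A) * (Φ * C))).det = 0 := by
        rw [det_mul, hPdet.mul_right_eq_zero]
    _ ↔ (c • P - A * Φ * C).det = 0 := by
        rw [mul_sub, Matrix.mul_smul, mul_one, ← Matrix.mul_assoc, ← Matrix.mul_assoc,
          ← Matrix.mul_assoc, mul_nonsing_inv _ hPdet, Matrix.one_mul]

end Matrix

theorem stmt18_general (L D : ℕ) (Q : Matrix (Fin L) (Fin L) ℂ) (hQ : Q.PosDef)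
    (A : Matrix (Fin L) (Fin D) ℂ) (hrank : A.rank = D)
    (Φ : Matrix (Fin D) (Fin D) ℂ) :
    ∀ lam : ℂ, lam ≠ 0 →
      ((lam • (Aᴴ * Q⁻¹ * A)⁻¹ - Φ).det = 0 ↔
        (lam • Q - A * Φ * Aᴴ).det = 0) := fun _ hlam =>
  have hA : Function.Injective A.mulVec :=
    mulVec_injective_of_rank_eq_card (hrank.trans (Fintype.card_fin D).symm)
  det_smul_inv_sub_eq_zero_iff_det_smul_sub_mul_mul_eq_zero hQ.isUnit A Aᴴ Φ
    (hQ.inv.conjTranspose_mul_mul_same hA).isUnit hlam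

/-- Let `Q` be an `L × L` Hermitian positive definite matrix, `A`
an `L × D` complex matrix of rank `D` (so `Aᴴ Q⁻¹ A` is invertible), and `Φ` a
`D × D` Hermitian matrix.  Then for every `λ ≠ 0`:
`det(λ·(AᴴQ⁻¹A)⁻¹ − Φ) = 0 ↔ det(λ·Q − A·Φ·Aᴴ) = 0`; that is, the pairs
`(Φ, (AᴴQ⁻¹A)⁻¹)` and `(AΦAᴴ, Q)` have the same nonzero generalized
eigenvalues. -/
theorem stmt18 (L D : ℕ) (Q : Matrix (Fin L) (Fin L) ℂ) (hQ : Q.PosDef)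
    (A : Matrix (Fin L) (Fin D) ℂ) (hrank : A.rank = D)
    (Φ : Matrix (Fin D) (Fin D) ℂ) (hΦ : Φ.IsHermitian) :
    ∀ lam : ℂ, lam ≠ 0 →
      ((lam • (Aᴴ * Q⁻¹ * A)⁻¹ - Φ).det = 0 ↔
        (lam • Q - A * Φ * Aᴴ).det = 0) :=
  stmt18_general L D Q hQ A hrank Φ
end
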